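/- Let n : ℕ, let sd(n) be the poset of nonempty finite subsets of Fin (n+1) ordered by inclusion, regarded as a category, and let W be the class of inclusions S ⊆ T with T = S ∪ {max T}. If a functor F : sd(n) ⥤ E into any category E sends every morphism of W to an isomorphism, then F sends every inclusion S ⊆ T of nonempty subsets with min S = min T to an isomorphism. -/

import Mathlib

/-!
A set `T` with least element `m` is reached from `{m}` by adding its elements in increasing
order, and each step `T.erase (max T) ⊆ T` lies in `W`. So `F` inverts every inclusion `{m} ⊆ T`
with `min T = m`, and an inclusion `S ⊆ T` with `min S = min T = m` is then inverted by
two-out-of-three.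
-/

open CategoryTheory

/-- The subdivision `sd([n])`: the poset of nonempty finite subsets of `Fin (n+1)`,
ordered by inclusion, regarded as a category. -/
abbrev Sd (n : ℕ) := {S : Finset (Fin (n + 1)) // S.Nonempty}

/-- The class of morphisms `S ⊆ T` of `sd([n])` with `T = S ∪ {max T}`; these are the
cocartesian morphisms of the locally cocartesian fibration `max : sd([n]) → [n]`. -/
def sdW (n : ℕ) : MorphismProperty (Sd n) :=
  fun S T _ => T.1 = insert (T.1.max' T.2) S.1

namespace Sd

variable {n : ℕ}

abbrev vertex (m : Fin (n + 1)) : Sd n := ⟨{m}, Finset.singleton_nonempty m⟩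

lemma sdW_eraseMax (T : Sd n) (h : (T.1.erase (T.1.max' T.2)).Nonempty)
    (f : (⟨T.1.erase (T.1.max' T.2), h⟩ : Sd n) ⟶ T) : sdW n f :=
  (Finset.insert_erase (T.1.max'_mem T.2)).symm

variable {E : Type*} [Category E] {F : Sd n ⥤ E}

theorem isIso_map_vertex_of_isLeast (hF : (sdW n).IsInvertedBy F) (T : Sd n) {m : Fin (n + 1)}
    (hm : IsLeast (T.1 : Set (Fin (n + 1))) m) (f : vertex m ⟶ T) : IsIso (F.map f) := by
  set M := T.1.max' T.2
  by_cases hmM : M = m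
  · have hTm : T ≤ vertex m := fun x hx =>
      Finset.mem_singleton.2 (le_antisymm (hmM ▸ T.1.le_max' x hx) (hm.2 hx))
    have : IsIso f := (iso_of_both_ways f (homOfLE hTm)).isIso_hom
    infer_instance
  · have hmT' : m ∈ T.1.erase M := Finset.mem_erase.2 ⟨Ne.symm hmM, hm.1⟩
    let T' : Sd n := ⟨T.1.erase M, m, hmT'⟩
    let g : vertex m ⟶ T' := homOfLE (Finset.singleton_subset_iff.2 hmT')
    let w : T' ⟶ T := homOfLE (Finset.erase_subset _ _)
    have hg : IsIso (F.map g) := isIso_map_vertex_of_isLeast hF T'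
      ⟨hmT', fun _ hx => hm.2 (Finset.mem_of_mem_erase hx)⟩ g
    have hw : IsIso (F.map w) := hF w (sdW_eraseMax T _ w)
    rw [Subsingleton.elim f (g ≫ w), F.map_comp]
    infer_instance
termination_by T.1.card
decreasing_by exact Finset.card_erase_lt_of_mem (T.1.max'_mem T.2)

end Sd

/-- If a functor `F : sd([n]) ⥤ E` sends every morphism of `W` to an isomorphism, then it
sends every inclusion `S ⊆ T` of nonempty subsets with `min S = min T` to an isomorphism. -/
theorem isIso_map_of_min_eq_of_invertsW (n : ℕ) {E : Type*} [Category E]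
    (F : Sd n ⥤ E) (hF : (sdW n).IsInvertedBy F) :
    ∀ (S T : Sd n) (f : S ⟶ T), S.1.min' S.2 = T.1.min' T.2 → IsIso (F.map f) := by
  intro S T f hmin
  set m := S.1.min' S.2
  let g : Sd.vertex m ⟶ S := homOfLE (Finset.singleton_subset_iff.2 (S.1.min'_mem S.2))
  have hg : IsIso (F.map g) := Sd.isIso_map_vertex_of_isLeast hF S (S.1.isLeast_min' S.2) g
  have hgf : IsIso (F.map (g ≫ f)) :=
    Sd.isIso_map_vertex_of_isLeast hF T (hmin ▸ T.1.isLeast_min' T.2) (g ≫ f)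
  rw [F.map_comp] at hgf
  exact IsIso.of_isIso_comp_left (F.map g) (F.map f)
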